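/- In a finite DAG, if a vertex v has in-degree 1 with unique in-edge from u, then every path from any source y to any vertex w passing through v also passes through u immediately before v; consequently eliminating v (merging the weight c(u,v) into each out-edge of v, i.e., replacing each edge (v,s) by (u,s) with weight c(u,v)·c(v,s)) preserves all source-to-sink path sums. -/

import Mathlib

open scoped Classical

def IsPath {V : Type*} (E : V → V → Prop) (u v : V) (l : List V) : Prop :=
  l ≠ [] ∧ l.Chain' E ∧ l.head? = some u ∧ l.getLast? = some v

def pathWeight {V R : Type*} [CommRing R] (c : V → V → R) (l : List V) : R :=
  ((l.zip l.tail).map fun p => c p.1 p.2).prod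

noncomputable def pathSum {V R : Type*} [CommRing R] (E : V → V → Prop) (c : V → V → R)
    (u v : V) : R :=
  ∑ᶠ l ∈ {l : List V | IsPath E u v l}, pathWeight c l

/-!
Every edge into `v` comes from `u`, so on any path the vertex before `v` is `u`.

Path sums to `x` satisfy the first-step recursion `P y = ∑ b, w y b * P b` for `y ≠ x`, with
`P x = 1`. For `y ≠ v` the eliminated weights are `w' y b = [b ≠ v] w y b + w y v * w v b`
(the column of `v` is supported on `u`), so substituting the recursion for `P v` (valid since
`v ≠ x`) turns the recursion of the eliminated graph into the original one. Well-founded induction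
along the eliminated graph, which is acyclic and never enters `v`, then identifies the two sums.
-/

open Relation

section Paths

variable {V : Type*} {E : V → V → Prop}

lemma List.IsChain.getElem?_eq_of_unique_pred {u v : V} {l : List V} (hl : l.IsChain E)
    (huniq : ∀ a, E a v → a = u) {i : ℕ} (hi : l[i + 1]? = some v) : l[i]? = some u := by
  obtain ⟨hlen, hv⟩ := List.getElem?_eq_some_iff.mp hi
  exact List.getElem?_eq_some_iff.mpr
    ⟨by omega, huniq _ (hv ▸ List.isChain_iff_getElem.mp hl i hlen)⟩

lemma List.IsChain.nodup_of_acyclic (hacyc : ∀ a, ¬ TransGen E a a) {l : List V}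
    (hl : l.IsChain E) : l.Nodup := by
  refine (List.isChain_iff_pairwise.mp (hl.imp fun _ _ => TransGen.single)).imp ?_
  rintro a _ h rfl
  exact hacyc a h

lemma isPath_iff {y x : V} {l : List V} :
    IsPath E y x l ↔ l ≠ [] ∧ l.IsChain E ∧ l.head? = some y ∧ l.getLast? = some x :=
  Iff.rfl

lemma IsPath.exists_eq_cons {y x : V} {l : List V} (h : IsPath E y x l) : ∃ t, l = y :: t := by
  obtain ⟨hne, -, hy, -⟩ := h
  obtain ⟨a, t, rfl⟩ := List.exists_cons_of_ne_nil hne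
  exact ⟨t, by simpa using hy⟩

lemma IsPath.head_eq {y x a : V} {t : List V} (h : IsPath E y x (a :: t)) : a = y := by
  simpa using h.2.2.1

lemma IsPath.reflTransGen {y x : V} {l : List V} (h : IsPath E y x l) : ReflTransGen E y x := by
  obtain ⟨hne, hch, hy, hx⟩ := h
  obtain ⟨a, t, rfl⟩ := List.exists_cons_of_ne_nil hne
  obtain rfl : a = y := by simpa using hy
  exact List.relationReflTransGen_of_exists_isChain_cons t hch
    (by simpa [List.getLast?_eq_some_getLast] using hx)

lemma isPath_singleton {y x a : V} : IsPath E y x [a] ↔ a = y ∧ a = x := by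
  simp [isPath_iff]

lemma isPath_cons_cons {y x a b : V} {t : List V} :
    IsPath E y x (a :: b :: t) ↔ a = y ∧ E a b ∧ IsPath E b x (b :: t) := by
  simp [isPath_iff, and_assoc, and_left_comm]

lemma isPath_cons_iff_of_ne {y x a : V} {t : List V} (hyx : y ≠ x) :
    IsPath E y x (a :: t) ↔ a = y ∧ ∃ b, E y b ∧ IsPath E b x t := by
  cases t with
  | nil => simpa [isPath_iff] using fun hay : a = y => hay ▸ hyx
  | cons b t =>
    rw [isPath_cons_cons]
    constructor
    · rintro ⟨rfl, hab, hb⟩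
      exact ⟨rfl, b, hab, hb⟩
    · rintro ⟨rfl, b', hab', hb'⟩
      obtain rfl := hb'.head_eq
      exact ⟨rfl, hab', hb'⟩

lemma setOf_isPath_of_ne {y x : V} (hyx : y ≠ x) :
    {l | IsPath E y x l} = ⋃ b ∈ {b | E y b}, List.cons y '' {l | IsPath E b x l} := by
  ext (_ | ⟨a, t⟩)
  · simp [isPath_iff]
  · simp [isPath_cons_iff_of_ne hyx, eq_comm, and_assoc, and_left_comm, ← exists_and_left]

lemma setOf_isPath_self (hacyc : ∀ a, ¬ TransGen E a a) (x : V) :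
    {l | IsPath E x x l} = {[x]} := by
  ext (_ | ⟨a, _ | ⟨b, t⟩⟩)
  · simp [isPath_iff]
  · simp [isPath_singleton]
  · simp only [Set.mem_ofPred_eq, Set.mem_singleton_iff, List.cons.injEq, reduceCtorEq,
      and_false, iff_false, isPath_cons_cons]
    rintro ⟨rfl, hab, hb⟩
    exact hacyc a (TransGen.head'_iff.mpr ⟨b, hab, hb.reflTransGen⟩)

lemma finite_setOf_isPath [Finite V] (hacyc : ∀ a, ¬ TransGen E a a) (y x : V) :
    {l | IsPath E y x l}.Finite :=
  have := Fintype.ofFinite V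
  (List.finite_length_le V (Fintype.card V)).subset fun _ hl =>
    (List.IsChain.nodup_of_acyclic hacyc hl.2.1).length_le_card

lemma wellFounded_flip_of_acyclic [Finite V] (hacyc : ∀ a, ¬ TransGen E a a) :
    WellFounded (flip E) :=
  have : IsTrans V (fun a b => TransGen E b a) := ⟨fun _ _ _ h₁ h₂ => h₂.trans h₁⟩
  have : Std.Irrefl (fun a b => TransGen E b a) := ⟨hacyc⟩
  Subrelation.wf (r := fun a b => TransGen E b a) (fun h => TransGen.single h)
    (Finite.wellFounded_of_trans_of_irrefl _)

end Paths

section PathSum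

variable {V R : Type*} [CommRing R] {E : V → V → Prop}

noncomputable def edgeWeight (E : V → V → Prop) (c : V → V → R) (a b : V) : R :=
  if E a b then c a b else 0

lemma pathWeight_cons_cons (c : V → V → R) (a b : V) (t : List V) :
    pathWeight c (a :: b :: t) = c a b * pathWeight c (b :: t) := by
  simp [pathWeight]

lemma pathSum_self (hacyc : ∀ a, ¬ TransGen E a a) (c : V → V → R) (x : V) :
    pathSum E c x x = 1 := by
  rw [pathSum, setOf_isPath_self hacyc, finsum_mem_singleton]
  simp [pathWeight]

lemma pathSum_of_ne [Fintype V] (hacyc : ∀ a, ¬ TransGen E a a) (c : V → V → R) {y x : V}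
    (hyx : y ≠ x) : pathSum E c y x = ∑ b, edgeWeight E c y b * pathSum E c b x := by
  have hdisj : {b | E y b}.PairwiseDisjoint fun b => List.cons y '' {l | IsPath E b x l} := by
    intro b _ b' _ hbb'
    refine Set.disjoint_left.mpr ?_
    rintro _ ⟨t, ht, rfl⟩ ⟨t', ht', heq⟩
    obtain rfl := List.cons_injective heq
    exact hbb' (Option.some_inj.mp (ht.2.2.1.symm.trans ht'.2.2.1))
  rw [pathSum, setOf_isPath_of_ne hyx, finsum_mem_biUnion hdisj (Set.toFinite _)
    fun b _ => (finite_setOf_isPath hacyc b x).image _, finsum_mem_def, finsum_eq_sum_of_fintype]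
  refine Finset.sum_congr rfl fun b _ => ?_
  by_cases hb : E y b
  · rw [Set.indicator_of_mem (show b ∈ {b | E y b} from hb),
      finsum_mem_image List.cons_injective.injOn, edgeWeight, if_pos hb, pathSum,
      mul_finsum_mem' _ _ (finite_setOf_isPath hacyc b x)]
    refine finsum_mem_congr rfl fun t ht => ?_
    obtain ⟨t, rfl⟩ := ht.exists_eq_cons
    exact pathWeight_cons_cons c y b t
  · simp [hb, edgeWeight]

end PathSum

section Elimination

variable {V R : Type*} [CommRing R] {E : V → V → Prop} {u v : V}

def elimRel (E : V → V → Prop) (u v : V) (a b : V) : Prop :=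
  (E a b ∧ a ≠ v ∧ b ≠ v) ∨ (a = u ∧ E v b)

noncomputable def elimWeight (E : V → V → Prop) (c : V → V → R) (u v : V) (a b : V) : R :=
  (if E a b ∧ a ≠ v ∧ b ≠ v then c a b else 0) +
    (if a = u ∧ E v b then c u v * c v b else 0)

lemma transGen_of_elimRel (hE : E u v) {a b : V} (h : elimRel E u v a b) : TransGen E a b := by
  rcases h with ⟨hab, -, -⟩ | ⟨rfl, hvb⟩
  · exact .single hab
  · exact .head hE (.single hvb)

lemma elimRel_acyclic (hacyc : ∀ a, ¬ TransGen E a a) (hE : E u v) (a : V) :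
    ¬ TransGen (elimRel E u v) a a := fun h =>
  hacyc a (h.lift' id fun _ _ => transGen_of_elimRel hE)

lemma ne_of_elimRel (hacyc : ∀ a, ¬ TransGen E a a) {a b : V} (h : elimRel E u v a b) :
    b ≠ v := by
  rcases h with ⟨-, -, hbv⟩ | ⟨-, hvb⟩
  · exact hbv
  · rintro rfl
    exact hacyc b (.single hvb)

lemma elimWeight_of_not_elimRel (c : V → V → R) {a b : V} (h : ¬ elimRel E u v a b) :
    elimWeight E c u v a b = 0 := by
  simp only [elimRel, not_or] at h
  simp [elimWeight, h.1, h.2]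

lemma edgeWeight_elimRel (c : V → V → R) :
    edgeWeight (elimRel E u v) (elimWeight E c u v) = elimWeight E c u v := by
  ext a b
  by_cases h : elimRel E u v a b
  · simp [edgeWeight, h]
  · simp [edgeWeight, h, elimWeight_of_not_elimRel c h]

lemma elimWeight_of_ne (hE : E u v) (huniq : ∀ a, E a v → a = u) (c : V → V → R)
    {a : V} (hav : a ≠ v) (b : V) :
    elimWeight E c u v a b = (if b = v then 0 else edgeWeight E c a b) +
      edgeWeight E c a v * edgeWeight E c v b := by
  rcases eq_or_ne a u with rfl | hau
  · by_cases hbv : b = v <;> simp [elimWeight, edgeWeight, *]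
  · have hav' : ¬ E a v := fun h => hau (huniq a h)
    by_cases hbv : b = v <;> simp [elimWeight, edgeWeight, *]

lemma sum_elimWeight_mul [Fintype V] (hE : E u v) (huniq : ∀ a, E a v → a = u)
    (c : V → V → R) {a : V} (hav : a ≠ v) (g : V → R)
    (hg : g v = ∑ b, edgeWeight E c v b * g b) :
    ∑ b, elimWeight E c u v a b * g b = ∑ b, edgeWeight E c a b * g b := calc
  _ = ∑ b, ((if b = v then 0 else edgeWeight E c a b * g b) +
        edgeWeight E c a v * (edgeWeight E c v b * g b)) := by
    simp only [elimWeight_of_ne hE huniq c hav, add_mul, ite_mul, zero_mul, mul_assoc]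
  _ = ∑ b, ((if b = v then 0 else edgeWeight E c a b * g b) +
        if b = v then edgeWeight E c a v * g v else 0) := by
    rw [Finset.sum_add_distrib, Finset.sum_add_distrib, ← Finset.mul_sum, ← hg,
      Finset.sum_ite_eq' Finset.univ v, if_pos (Finset.mem_univ v)]
  _ = ∑ b, edgeWeight E c a b * g b := Finset.sum_congr rfl fun b _ => by
    split_ifs with hbv
    · rw [hbv, zero_add]
    · rw [add_zero]

theorem pathSum_elim [Fintype V] (hacyc : ∀ a, ¬ TransGen E a a) (hE : E u v)
    (huniq : ∀ a, E a v → a = u) (c : V → V → R) {x : V} (hvx : v ≠ x) {y : V}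
    (hyv : y ≠ v) :
    pathSum (elimRel E u v) (elimWeight E c u v) y x = pathSum E c y x := by
  induction y using (wellFounded_flip_of_acyclic (elimRel_acyclic hacyc hE)).induction with
  | _ y ih =>
    rcases eq_or_ne y x with rfl | hyx
    · rw [pathSum_self (elimRel_acyclic hacyc hE), pathSum_self hacyc]
    rw [pathSum_of_ne (elimRel_acyclic hacyc hE) _ hyx, pathSum_of_ne hacyc _ hyx,
      edgeWeight_elimRel, ← sum_elimWeight_mul hE huniq c hyv _ (pathSum_of_ne hacyc c hvx)]
    refine Finset.sum_congr rfl fun b _ => ?_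
    by_cases hyb : elimRel E u v y b
    · rw [ih b hyb (ne_of_elimRel hacyc hyb)]
    · rw [elimWeight_of_not_elimRel c hyb, zero_mul, zero_mul]

end Elimination

/-- If the intermediate vertex `v` has in-degree 1 with unique in-edge from `u`, then
(1) on every path from a source `y`, each occurrence of `v` is immediately preceded by
`u`, and (2) eliminating `v` — deleting `v` with its incident edges and adding, for every
out-neighbour `s` of `v`, an edge `u → s` of weight `c u v * c v s` (added to the weight
of a pre-existing edge `u → s`) — preserves all source-to-sink path sums. -/
theorem stmt17 {V R : Type*} [Fintype V] [CommRing R] (E : V → V → Prop)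
    (hacyc : ∀ a : V, ¬ Relation.TransGen E a a) (c : V → V → R)
    (u v : V) (hE : E u v) (huniq : ∀ a, E a v → a = u) (hout : ∃ s, E v s) :
    (∀ (y z : V) (l : List V), (∀ a, ¬ E a y) → IsPath E y z l →
      ∀ i : ℕ, l[i + 1]? = some v → l[i]? = some u) ∧
    (∀ y x : V, (∀ a, ¬ E a y) → (∀ b, ¬ E x b) →
      pathSum (fun a b => (E a b ∧ a ≠ v ∧ b ≠ v) ∨ (a = u ∧ E v b))
        (fun a b => (if E a b ∧ a ≠ v ∧ b ≠ v then c a b else 0) +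
          (if a = u ∧ E v b then c u v * c v b else 0)) y x
      = pathSum E c y x) := by
  refine ⟨fun _ _ _ _ hl _ => List.IsChain.getElem?_eq_of_unique_pred hl.2.1 huniq,
    fun y x hy hx => ?_⟩
  obtain ⟨s, hvs⟩ := hout
  have hvx : v ≠ x := fun h => hx s (h ▸ hvs)
  have hyv : y ≠ v := fun h => hy u (h ▸ hE)
  exact pathSum_elim hacyc hE huniq c hvx hyv
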